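/- arXiv:1901.06430 — 6 statements merged into one kernel-verified Lean document; each statement's English description precedes it below -/
import Mathlib

section
/- Any two multidegrees of the same total degree on a tree are linearly equivalent; i.e., if Γ is a finite tree and D₁, D₂ are integer-valued functions on the vertices of Γ with the same total sum, then D₂ − D₁ is an integer linear combination of the functions mtd(𝒪_v), where mtd(𝒪_v) takes value −val(v) at v, value 1 at each vertex adjacent to v, and 0 elsewhere. -/
/-!
`mtd(𝒪_v)` is minus the `v`-th column of the Laplacian `L` of `Γ`, so the claim is
that every integer vector of total sum zero lies in the image of `L` over `ℤ`. That image contains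
`δ_u - δ_v` for every bridge `uv`: apply `L` to the indicator of the side of the bridge containing
`u`. In a tree every edge is a bridge, so chaining along paths gives `δ_u - δ_v` for all `u, v`,
and these span the sum-zero vectors.
-/

open Finset Matrix

namespace SimpleGraph

variable {V : Type*} [Fintype V] [DecidableEq V] (G : SimpleGraph V) [DecidableRel G.Adj]

def principalDivisors : Submodule ℤ (V → ℤ) :=
  LinearMap.range (G.lapMatrix ℤ).mulVecLin

variable {G}

theorem mem_principalDivisors {f : V → ℤ} :
    f ∈ G.principalDivisors ↔ ∃ c, G.lapMatrix ℤ *ᵥ c = f :=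
  LinearMap.mem_range

theorem lapMatrix_mulVec_apply_eq_sum_sub {R : Type*} [NonAssocRing R] (c : V → R) (w : V) :
    (G.lapMatrix R *ᵥ c) w = ∑ x ∈ G.neighborFinset w, (c w - c x) := by
  rw [lapMatrix_mulVec_apply, sum_sub_distrib, sum_const, card_neighborFinset_eq_degree,
    nsmul_eq_mul]

theorem neg_lapMatrix_apply {R : Type*} [AddGroupWithOne R] (w v : V) :
    -G.lapMatrix R w v = if w = v then -(G.degree v : R) else if G.Adj v w then 1 else 0 := by
  by_cases hwv : w = v
  · subst hwv
    simp [lapMatrix, degMatrix]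
  · by_cases hadj : G.Adj v w <;> simp [lapMatrix, degMatrix, hwv, hadj, G.adj_comm w v]

theorem single_sub_single_mem_principalDivisors_of_isBridge {u v : V} (hadj : G.Adj u v)
    (hbridge : G.IsBridge s(u, v)) : Pi.single u 1 - Pi.single v 1 ∈ G.principalDivisors := by
  set H := G.deleteEdges {s(u, v)}
  set c : V → ℤ := fun x => if H.Reachable u x then 1 else 0
  have hflat : ∀ w, ∀ x ∈ G.neighborFinset w, s(w, x) ≠ s(u, v) → c w - c x = 0 := by
    intro w x hx hne
    have hH : H.Adj w x := by simpa [H, hne] using hx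
    have hiff : H.Reachable u w ↔ H.Reachable u x :=
      ⟨fun h => h.trans hH.reachable, fun h => h.trans hH.symm.reachable⟩
    simp only [c, hiff, sub_self]
  have hcu : c u = 1 := if_pos .rfl
  have hcv : c v = 0 := if_neg (isBridge_iff.mp hbridge)
  refine mem_principalDivisors.mpr ⟨c, funext fun w => ?_⟩
  rw [lapMatrix_mulVec_apply_eq_sum_sub]
  by_cases hwu : w = u
  · subst hwu
    rw [sum_eq_single v (fun x hx hxv => hflat w x hx (Sym2.congr_right.not.mpr hxv))
      (by simp [hadj])]
    simp [hcu, hcv, hadj.ne]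
  by_cases hwv : w = v
  · subst hwv
    rw [sum_eq_single u
      (fun x hx hxu => hflat w x hx fun h => hxu (Sym2.congr_right.mp (h.trans Sym2.eq_swap)))
      (by simp [hadj.symm])]
    simp [hcu, hcv, hwu]
  · rw [sum_eq_zero fun x hx => hflat w x hx (by simp [hwu, hwv])]
    simp [hwu, hwv]

theorem single_sub_single_mem_principalDivisors_of_reachable (hG : G.IsAcyclic) {u v : V}
    (h : G.Reachable u v) : Pi.single u 1 - Pi.single v 1 ∈ G.principalDivisors := by
  obtain ⟨p⟩ := h
  induction p with
  | nil => simp only [sub_self, zero_mem]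
  | @cons a b c hab _ ih =>
    rw [← sub_add_sub_cancel _ (Pi.single b 1)]
    exact add_mem
      (single_sub_single_mem_principalDivisors_of_isBridge hab
        (isAcyclic_iff_forall_adj_isBridge.mp hG hab)) ih

theorem mem_principalDivisors_of_sum_eq_zero (hG : G.IsTree) {f : V → ℤ} (hf : ∑ v, f v = 0) :
    f ∈ G.principalDivisors := by
  obtain ⟨r⟩ := hG.connected.nonempty
  have hdecomp : f = ∑ x, f x • (Pi.single x 1 - Pi.single r 1) :=
    calc f = ∑ x, Pi.single x (f x) - (∑ x, f x) • Pi.single r 1 := by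
          rw [hf, zero_smul, sub_zero, univ_sum_single]
      _ = _ := by simp only [smul_sub, sum_sub_distrib, sum_smul, ← Pi.single_smul', smul_eq_mul,
          mul_one]
  rw [hdecomp]
  exact sum_mem fun x _ => Submodule.smul_mem _ _ <|
    single_sub_single_mem_principalDivisors_of_reachable hG.isAcyclic
      (hG.connected.preconnected x r)

end SimpleGraph

/-- Any two multidegrees of the same total degree on a finite tree are
linearly equivalent: their difference is an integer linear combination of
the principal divisors `mtd(𝒪_v)`, where `mtd(𝒪_v)` takes value `-deg v`
at `v`, value `1` at each vertex adjacent to `v`, and `0` elsewhere. -/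
theorem tree_divisors_equivalent {V : Type*} [Fintype V] [DecidableEq V]
    (G : SimpleGraph V) [DecidableRel G.Adj] (hT : G.IsTree)
    (D₁ D₂ : V → ℤ) (h : ∑ v, D₁ v = ∑ v, D₂ v) :
    ∃ c : V → ℤ, ∀ w : V,
      D₂ w - D₁ w =
        ∑ v, c v * (if w = v then -(G.degree v : ℤ)
          else if G.Adj v w then 1 else 0) := by
  obtain ⟨c, hc⟩ := SimpleGraph.mem_principalDivisors.mp <|
    SimpleGraph.mem_principalDivisors_of_sum_eq_zero hT (f := D₁ - D₂) (by simp [sum_sub_distrib, h])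
  refine ⟨c, fun w => ?_⟩
  simp_rw [← SimpleGraph.neg_lapMatrix_apply, mul_neg, sum_neg_distrib, mul_comm (c _)]
  rw [← dotProduct, ← mulVec, hc, Pi.sub_apply, neg_sub]
end

section
/- For d = 4 and all natural numbers u, Σ_{i=0}^{4} (−1)^i C(u,i)·C(7u, 4−i) = 54u⁴ − 72u³ + 20u² − 2u. -/
/-- For `d = 4`:
`Σ_{i=0}^{4} (-1)^i C(u,i)·C(7u, 4-i) = 54u⁴ - 72u³ + 20u² - 2u`. -/
theorem macdonald_specialized_d_four (u : ℕ) :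
    ∑ i ∈ Finset.range 5,
        (-1 : ℤ) ^ i * (u.choose i) * ((7 * u).choose (4 - i)) =
      54 * (u : ℤ) ^ 4 - 72 * (u : ℤ) ^ 3 + 20 * (u : ℤ) ^ 2 - 2 * u := by
  -- Over `ℚ`, `C(n, k) = n (n - 1) ⋯ (n - k + 1) / k!` is a polynomial in `n`, even for `k > n`,
  -- so the claim becomes a polynomial identity in `u`.
  apply Int.cast_injective (α := ℚ)
  simp only [Finset.sum_range_succ, Finset.sum_range_zero]
  push_cast
  simp only [Nat.cast_choose_eq_descPochhammer_div, descPochhammer_succ_eval, descPochhammer_zero,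
    Polynomial.eval_one, Nat.factorial]
  push_cast
  ring
end

section
/- Combinatorial equality for d = 3: for all natural numbers u, 40·C(u+1, 3) + 24·C(u, 3) = Σ_{i=0}^{3} (−1)^i C(u, i)·C(5u, 3−i). -/
theorem Nat.cast_choose_three (K : Type*) [DivisionRing K] [CharZero K] (a : ℕ) :
    (a.choose 3 : K) = a * (a - 1) * (a - 2) / 6 := by
  rw [Nat.cast_choose_eq_descPochhammer_div]
  simp only [descPochhammer_succ_eval, descPochhammer_zero, Polynomial.eval_one]
  norm_num [Nat.factorial]

/-- Combinatorial equality for `d = 3`: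
`40·C(u+1,3) + 24·C(u,3) = Σ_{i=0}^{3} (-1)^i C(u,i)·C(5u, 3-i)`. -/
theorem combinatorial_equality_d_three (u : ℕ) :
    (40 * (u + 1).choose 3 + 24 * u.choose 3 : ℤ) =
      ∑ i ∈ Finset.range 4,
        (-1 : ℤ) ^ i * (u.choose i) * ((5 * u).choose (3 - i)) := by
  apply Int.cast_injective (α := ℚ)
  simp only [Finset.sum_range_succ, Finset.sum_range_zero]
  push_cast [Nat.cast_choose_three, Nat.cast_choose_two, Nat.choose_one_right,
    Nat.choose_zero_right]
  ring
end

section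
/- Combinatorial equality for d = 4: for all natural numbers u, 364·C(u+2, 4) + 784·C(u+1, 4) + 148·C(u, 4) = Σ_{i=0}^{4} (−1)^i C(u, i)·C(7u, 4−i). -/
/-! Over `ℚ`, `C(n, k) = n (n - 1) ⋯ (n - k + 1) / k!`, so after expanding the sum both sides
are polynomials of degree 4 in `u`, and the identity is a polynomial identity. -/

/-- Combinatorial equality for `d = 4`:
`364·C(u+2,4) + 784·C(u+1,4) + 148·C(u,4)
  = Σ_{i=0}^{4} (-1)^i C(u,i)·C(7u, 4-i)`. -/
theorem combinatorial_equality_d_four (u : ℕ) :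
    (364 * (u + 2).choose 4 + 784 * (u + 1).choose 4 + 148 * u.choose 4 : ℤ) =
      ∑ i ∈ Finset.range 5,
        (-1 : ℤ) ^ i * (u.choose i) * ((7 * u).choose (4 - i)) := by
  suffices h : (364 * (u + 2).choose 4 + 784 * (u + 1).choose 4 + 148 * u.choose 4 : ℚ) =
      ∑ i ∈ Finset.range 5, (-1 : ℚ) ^ i * (u.choose i) * ((7 * u).choose (4 - i)) by
    exact_mod_cast h
  simp only [Finset.sum_range_succ, Nat.cast_choose_eq_descPochhammer_div,
    descPochhammer_eval_eq_prod_range, Finset.prod_range_succ, Nat.factorial]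
  push_cast
  ring
end

section
/- For t = 1 and all u ≥ 1, the cardinality of the set S = {(j₁,j₂) : 1 ≤ j₁ < j₂ ≤ 3u, j₁ ≢ 1 (mod 3), j₂ ≢ 0 (mod 3)} (i.e. the set {(j₁,…,j_{t+1}) : 1 ≤ j₁ < ⋯ < j_{t+1} ≤ (2t+1)u and j_k ≢ 2k−1 (mod 2t+1) for all k} with t = 1) equals Σ_{i=0}^{t+1} (−1)^i C(u, i)·C((2t+1)u, t+1−i) = 2u² − 2u. -/
private lemma cnt_aux (u : ℕ) :
    ((Finset.Icc 1 (3 * u)).filter (fun j => j % 3 ≠ 1)).card = 2 * u ∧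
      ((Finset.Icc 1 (3 * u + 1)).filter (fun j => j % 3 ≠ 1)).card = 2 * u := by
  induction u with
  | zero =>
      constructor <;> simp <;> decide
  | succ u ih =>
    obtain ⟨h1, h2⟩ := ih
    have e2 : Finset.Icc 1 (3 * u + 2) = insert (3 * u + 2) (Finset.Icc 1 (3 * u + 1)) := by
      ext x; simp only [Finset.mem_Icc, Finset.mem_insert]; omega
    have e3 : Finset.Icc 1 (3 * u + 3) = insert (3 * u + 3) (Finset.Icc 1 (3 * u + 2)) := by
      ext x; simp only [Finset.mem_Icc, Finset.mem_insert]; omega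
    have e4 : Finset.Icc 1 (3 * u + 4) = insert (3 * u + 4) (Finset.Icc 1 (3 * u + 3)) := by
      ext x; simp only [Finset.mem_Icc, Finset.mem_insert]; omega
    have c2 : ((Finset.Icc 1 (3 * u + 2)).filter (fun j => j % 3 ≠ 1)).card = 2 * u + 1 := by
      rw [e2, Finset.filter_insert, if_pos (by omega), Finset.card_insert_of_notMem
        (by simp only [Finset.mem_filter, Finset.mem_Icc]; omega), h2]
    have c3 : ((Finset.Icc 1 (3 * u + 3)).filter (fun j => j % 3 ≠ 1)).card = 2 * u + 2 := by
      rw [e3, Finset.filter_insert, if_pos (by omega), Finset.card_insert_of_notMem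
        (by simp only [Finset.mem_filter, Finset.mem_Icc]; omega), c2]
    have c4 : ((Finset.Icc 1 (3 * u + 4)).filter (fun j => j % 3 ≠ 1)).card = 2 * u + 2 := by
      rw [e4, Finset.filter_insert, if_neg (by omega), c3]
    constructor
    · have : 3 * (u + 1) = 3 * u + 3 := by ring
      rw [this, c3]; ring
    · have : 3 * (u + 1) + 1 = 3 * u + 4 := by ring
      rw [this, c4]; ring

private lemma card_good_nat (u : ℕ) :
    (((Finset.Icc 1 (3 * u)) ×ˢ (Finset.Icc 1 (3 * u))).filter
        (fun p => p.1 < p.2 ∧ p.1 % 3 ≠ 1 ∧ p.2 % 3 ≠ 0)).card + 2 * u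
      = 2 * u ^ 2 := by
  induction u with
  | zero => simp
  | succ u ih =>
    set P : ℕ × ℕ → Prop := fun p => p.1 < p.2 ∧ p.1 % 3 ≠ 1 ∧ p.2 % 3 ≠ 0 with hP
    have h3 : 3 * (u + 1) = 3 * u + 3 := by ring
    rw [h3]
    set S := (Finset.Icc 1 (3 * u + 3)) ×ˢ (Finset.Icc 1 (3 * u + 3)) with hS
    have hsplit := Finset.card_filter_add_card_filter_not
      (s := S.filter P) (p := fun p => p.2 ≤ 3 * u)
    have hold : (S.filter P).filter (fun p => p.2 ≤ 3 * u)
        = ((Finset.Icc 1 (3 * u)) ×ˢ (Finset.Icc 1 (3 * u))).filter P := by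
      ext ⟨a, b⟩
      simp only [Finset.mem_filter, Finset.mem_product, Finset.mem_Icc, hS, hP]
      omega
    have hnew : (S.filter P).filter (fun p => ¬ p.2 ≤ 3 * u)
        = ((Finset.Icc 1 (3 * u)).filter (fun j => j % 3 ≠ 1)) ×ˢ {3 * u + 1}
          ∪ ((Finset.Icc 1 (3 * u + 1)).filter (fun j => j % 3 ≠ 1)) ×ˢ {3 * u + 2} := by
      ext ⟨a, b⟩
      simp only [Finset.mem_filter, Finset.mem_product, Finset.mem_Icc, Finset.mem_union,
        Finset.mem_singleton, hS, hP]
      omega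
    have hdisj : Disjoint (((Finset.Icc 1 (3 * u)).filter (fun j => j % 3 ≠ 1)) ×ˢ
        ({3 * u + 1} : Finset ℕ))
        (((Finset.Icc 1 (3 * u + 1)).filter (fun j => j % 3 ≠ 1)) ×ˢ {3 * u + 2}) := by
      rw [Finset.disjoint_left]
      rintro ⟨a, b⟩ h1 h2
      simp only [Finset.mem_product, Finset.mem_singleton] at h1 h2
      omega
    obtain ⟨c1, c2⟩ := cnt_aux u
    have hnewcard : ((S.filter P).filter (fun p => ¬ p.2 ≤ 3 * u)).card = 4 * u := by
      rw [hnew, Finset.card_union_of_disjoint hdisj]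
      simp only [Finset.card_product, Finset.card_singleton, c1, c2]
      ring
    rw [hold, hnewcard] at hsplit
    have h' : (((Finset.Icc 1 (3 * u)) ×ˢ (Finset.Icc 1 (3 * u))).filter P).card
        + 2 * u = 2 * u ^ 2 := ih
    have hq : 2 * (u + 1) ^ 2 = 2 * u ^ 2 + 4 * u + 2 := by ring
    show (S.filter P).card + 2 * (u + 1) = 2 * (u + 1) ^ 2
    linarith [hsplit, h', hq]

/-- The `t = 1` case of the indexing set `S` of good inclusions: for `u ≥ 1`,
the number of pairs `(j₁, j₂)` with `1 ≤ j₁ < j₂ ≤ 3u`, `j₁ ≢ 1 (mod 3)`,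
and `j₂ ≢ 0 (mod 3)` equals `2u² - 2u`. -/
theorem card_good_inclusions_t_one (u : ℕ) (hu : 1 ≤ u) :
    ((((Finset.Icc 1 (3 * u)) ×ˢ (Finset.Icc 1 (3 * u))).filter
        (fun p => p.1 < p.2 ∧ p.1 % 3 ≠ 1 ∧ p.2 % 3 ≠ 0)).card : ℤ) =
      2 * (u : ℤ) ^ 2 - 2 * u := by
  have h := card_good_nat u
  have := congrArg (Nat.cast : ℕ → ℤ) h
  push_cast at this
  linarith
end

section
/- Given an increasing nearly-consecutive sequence L of length s+1 starting at 0 and ending at s with distinguished index i₀ (2 ≤ i₀ ≤ s), and integers m > s and M ≥ 2: for every increasing subsequence L* of L of length s*+1 and every decreasing subsequence Q of the m°°-complement L°° (defined by L°°_i = m − L_i) satisfying L*_i + Q_i ≤ m − M for all i, the total shift Σ_i (position of Q_i in L°°, counted from the corresponding complementary position of L*_i) is at least M·s* + 1. Concretely: each of the s*+1 entries contributes at least M−1 shifts, at most M−1 entries contribute exactly M−1 shifts, and hence the total number of shifts is at least (M−1)(M−1) + M(s*+1−(M−1)) = M·s* + 1. -/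
/-!
The recursion forces `L i = i + [j₀ ≤ i]`, so `L (w i) - L (v i)` exceeds the positional shift
`w i - v i` by at most one, and only when the skipped value lies between them. Hence every shift is
at least `M - 1`, and a shift equal to `M - 1` forces `v i` into the window `[j₀ + 1 - M, j₀)`.
Since `v` is injective, at most `M - 1` entries have the short shift, which gives
`Σ (w i - v i) ≥ M (s* + 1) - (M - 1) = M s* + 1`.
-/

open Finset

/-- The paper's `L(j₀, s, m)`, extended to all of `ℕ`: `0, 1, …, j₀ - 1, j₀ + 1, …`. -/
def nearlyConsecutive (j₀ i : ℕ) : ℕ := i + if j₀ ≤ i then 1 else 0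

theorem eq_nearlyConsecutive_of_succ {s j₀ : ℕ} (hj₀ : 0 < j₀) {L : Fin (s + 1) → ℕ}
    (hL0 : L 0 = 0)
    (hLstep : ∀ i : Fin s, L i.succ = L i.castSucc + (if i.val + 1 = j₀ then 2 else 1))
    (i : Fin (s + 1)) : L i = nearlyConsecutive j₀ i := by
  unfold nearlyConsecutive
  induction i using Fin.induction with
  | zero => simp only [hL0, Fin.val_zero, Nat.le_zero, hj₀.ne', if_false]
  | succ i ih =>
    rw [hLstep i, ih, Fin.val_succ, Fin.val_castSucc]
    split_ifs <;> omega

theorem nearlyConsecutive_shift_ge {j₀ M a b : ℕ}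
    (h : nearlyConsecutive j₀ a + M ≤ nearlyConsecutive j₀ b) :
    (M : ℤ) - (if a ∈ Ico (j₀ + 1 - M) j₀ then 1 else 0) ≤ (b : ℤ) - a := by
  unfold nearlyConsecutive at h
  simp only [mem_Ico]
  split_ifs at h ⊢ <;> omega

theorem card_filter_mem_Ico_le {ι : Type*} [Fintype ι] {v : ι → ℕ}
    (hv : Function.Injective v) (a b : ℕ) : #{i | v i ∈ Ico a b} ≤ b - a := by
  rw [← Nat.card_Ico]
  exact card_le_card_of_injOn v (fun i hi => (mem_filter.mp hi).2) hv.injOn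

theorem mul_card_sub_card_filter_le_sum {ι : Type*} [Fintype ι]
    (p : ι → Prop) [DecidablePred p] (M : ℤ) {f : ι → ℤ}
    (hf : ∀ i, M - (if p i then 1 else 0) ≤ f i) :
    M * Fintype.card ι - #{i | p i} ≤ ∑ i, f i := calc
  M * Fintype.card ι - #{i | p i} = ∑ i, (M - if p i then 1 else 0) := by
    rw [sum_sub_distrib, sum_const, sum_boole, card_univ, nsmul_eq_mul, mul_comm]
  _ ≤ ∑ i, f i := sum_le_sum fun i _ => hf i

theorem nearly_consecutive_shift_bound_general (s sstar m M j₀ : ℕ)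
    (hM : 2 ≤ M) (hj₀ : 2 ≤ j₀)
    (L : Fin (s + 1) → ℕ) (hL0 : L 0 = 0)
    (hLstep : ∀ i : Fin s,
      L i.succ = L i.castSucc + (if i.val + 1 = j₀ then 2 else 1))
    (v w : Fin (sstar + 1) → Fin (s + 1))
    (hv : StrictMono v)
    (hQ : ∀ i : Fin (sstar + 1),
      (L (v i) : ℤ) + ((m : ℤ) - L (w i)) ≤ (m : ℤ) - M) :
    (M : ℤ) * sstar + 1 ≤ ∑ i : Fin (sstar + 1), ((w i : ℤ) - (v i : ℤ)) := by
  have hL := eq_nearlyConsecutive_of_succ (by omega) hL0 hLstep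
  have hshift (i : Fin (sstar + 1)) :
      M - (if (v i : ℕ) ∈ Ico (j₀ + 1 - M) j₀ then 1 else 0) ≤ (w i : ℤ) - v i :=
    nearlyConsecutive_shift_ge (by have := hQ i; rw [hL, hL] at this; omega)
  have hshort : (#{i | (v i : ℕ) ∈ Ico (j₀ + 1 - M) j₀} : ℤ) ≤ M - 1 := by
    have := card_filter_mem_Ico_le (Fin.val_injective.comp hv.injective) (j₀ + 1 - M) j₀
    simp only [Function.comp_apply] at this
    omega
  have hsum := mul_card_sub_card_filter_le_sum _ _ hshift
  rw [Fintype.card_fin, Nat.cast_add_one] at hsum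
  linarith

/-- Claim on nearly-consecutive sequences: let `L` be the increasing
nearly-consecutive sequence of length `s+1` starting at `0` with
distinguished index `j₀` (`2 ≤ j₀ ≤ s`), and let `m > s`, `M ≥ 2`. If
`L*` is the increasing subsequence of `L` indexed by the strictly
increasing `v : Fin (s*+1) → Fin (s+1)`, and `Q` is the decreasing
subsequence of the `m°°`-complement `L°°ᵢ = m - Lᵢ` indexed by the strictly
increasing `w`, with `L*ᵢ + Qᵢ ≤ m - M` for all `i`, then `Q` is obtained
from the complement of `L*` by shifting in at least `M·s* + 1` places:
`Σᵢ (w(i) - v(i)) ≥ M·s* + 1`. -/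
theorem nearly_consecutive_shift_bound (s sstar m M j₀ : ℕ)
    (hm : s < m) (hM : 2 ≤ M) (hj₀ : 2 ≤ j₀) (hj₀' : j₀ ≤ s)
    (hsstar : sstar ≤ s)
    (L : Fin (s + 1) → ℕ) (hL0 : L 0 = 0)
    (hLstep : ∀ i : Fin s,
      L i.succ = L i.castSucc + (if i.val + 1 = j₀ then 2 else 1))
    (v w : Fin (sstar + 1) → Fin (s + 1))
    (hv : StrictMono v) (hw : StrictMono w)
    (hQ : ∀ i : Fin (sstar + 1),
      (L (v i) : ℤ) + ((m : ℤ) - L (w i)) ≤ (m : ℤ) - M) :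
    (M : ℤ) * sstar + 1 ≤ ∑ i : Fin (sstar + 1), ((w i : ℤ) - (v i : ℤ)) :=
  nearly_consecutive_shift_bound_general s sstar m M j₀ hM hj₀ L hL0 hLstep v w hv hQ
end
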